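/- Fix integers N ≥ 1 and T ≥ 1 with N·T ≥ 3, and a learning rate η > 0. Let f_1,…,f_T : {1,…,N} → [0,1] be fixed loss functions, and let y_1,…,y_T be independent random variables, each uniformly distributed on {1,…,N}. Run the MW² recursion with mixing parameter γ = 1/T: w_1(x) = 1 for all x; W_t = Σ_x w_t(x); q_t(x) = w_t(x)/W_t; and w_{t+1}(x) = w_t(x)·exp(−η·N·f_t(x)·𝟙[x = y_t]) + (γ/N)·W_t. Then for any rounds t0 ≤ t1 with t1 − t0 + 1 ≤ T: E[ Σ_{t=t0}^{t1} Σ_{x=1}^{N} q_t(x)·f_t(x) ] − min_{x∈{1,…,N}} Σ_{t=t0}^{t1} f_t(x) ≤ (4·log(N·T))/η + η·N·T, where the expectation is over the random draws y_1,…,y_T (the weights w_t and distributions q_t are random, determined by y_1,…,y_{t−1}). -/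

import Mathlib

/-!
Along every sequence of draws `y`, MW² is multiplicative weights with fixed-share mixing run on
the importance-weighted losses `ℓ̂ₜ(x) = N fₜ(x) 𝟙[x = yₜ]`. Per round, the log of the total
weight `Wₜ` drops by at least `η⟨qₜ, ℓ̂ₜ⟩ - η²⟨qₜ, ℓ̂ₜ²⟩ - γ` (from `exp (-u) ≤ 1 - u + u²` and
`log s ≤ s - 1`), while `log wₜ(x)` drops by at most `η ℓ̂ₜ(x)`; the mixing keeps every weight above
a `γ / (N (1 + γ))` fraction of the total, so the comparison may start at any round `t0`.
Since `qₜ` only depends on `y₁, …, yₜ₋₁`, averaging over the uniform draw `yₜ` turns `⟨qₜ, ℓ̂ₜ⟩`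
into `⟨qₜ, fₜ⟩`, `ℓ̂ₜ(x)` into `fₜ(x)`, and `⟨qₜ, ℓ̂ₜ²⟩` into `N ⟨qₜ, fₜ²⟩ ≤ N`.
-/

open Finset Real

theorem exp_neg_le_one_sub_add_sq {a : ℝ} (ha : 0 ≤ a) : exp (-a) ≤ 1 - a + a ^ 2 := by
  have h1a : 0 < 1 + a := by linarith
  calc exp (-a) = (exp a)⁻¹ := exp_neg a
    _ ≤ (1 + a)⁻¹ := inv_anti₀ h1a (by linarith [add_one_le_exp a])
    _ ≤ 1 - a + a ^ 2 := by
      rw [inv_le_iff_one_le_mul₀' h1a]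
      nlinarith [pow_nonneg ha 3]

theorem sum_div_sum_mul_le_one {ι : Type*} [Fintype ι] {v g : ι → ℝ} (hv : ∀ x, 0 ≤ v x)
    (hV : 0 < ∑ z, v z) (hg : ∀ x, g x ≤ 1) : ∑ x, v x / (∑ z, v z) * g x ≤ 1 := by
  simp only [div_mul_eq_mul_div, ← sum_div]
  rw [div_le_one hV]
  exact sum_le_sum fun x _ => mul_le_of_le_one_right (hv x) (hg x)

section MixingStep

variable {ι : Type*} [Fintype ι] {v v' ℓ : ι → ℝ} {η β : ℝ}

theorem mixingStep_pos (hv' : ∀ x, v' x = v x * exp (-(η * ℓ x)) + β * ∑ z, v z)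
    (hv : ∀ x, 0 < v x) (hβ : 0 ≤ β) (x : ι) : 0 < v' x := by
  rw [hv']
  have := hv x
  have := sum_nonneg fun z (_ : z ∈ univ) => (hv z).le
  positivity

theorem mul_sum_le_mixingStep (hv' : ∀ x, v' x = v x * exp (-(η * ℓ x)) + β * ∑ z, v z)
    (hv : ∀ x, 0 ≤ v x) (x : ι) : β * ∑ z, v z ≤ v' x := by
  rw [hv']
  have := hv x
  have := exp_pos (-(η * ℓ x))
  nlinarith

theorem sum_mixingStep_le (hv' : ∀ x, v' x = v x * exp (-(η * ℓ x)) + β * ∑ z, v z)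
    (hv : ∀ x, 0 ≤ v x) (hηℓ : ∀ x, 0 ≤ η * ℓ x) :
    ∑ x, v' x ≤ (1 + Fintype.card ι * β) * ∑ z, v z := by
  have hle : ∀ x, v x * exp (-(η * ℓ x)) ≤ v x := fun x =>
    mul_le_of_le_one_right (hv x) (exp_le_one_iff.mpr (neg_nonpos.mpr (hηℓ x)))
  calc ∑ x, v' x ≤ ∑ x, (v x + β * ∑ z, v z) :=
        sum_le_sum fun x _ => by rw [hv']; linarith [hle x]
    _ = (1 + Fintype.card ι * β) * ∑ z, v z := by
        rw [sum_add_distrib, sum_const, card_univ, nsmul_eq_mul]; ring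

theorem log_sub_le_log_mixingStep (hv' : ∀ x, v' x = v x * exp (-(η * ℓ x)) + β * ∑ z, v z)
    (hv : ∀ x, 0 < v x) (hβ : 0 ≤ β) (x : ι) : log (v x) - η * ℓ x ≤ log (v' x) := by
  have hle : v x * exp (-(η * ℓ x)) ≤ v' x := by
    rw [hv']
    have := sum_nonneg fun z (_ : z ∈ univ) => (hv z).le
    nlinarith
  calc log (v x) - η * ℓ x = log (v x * exp (-(η * ℓ x))) := by
        rw [log_mul (hv x).ne' (exp_pos _).ne', log_exp]; ring
    _ ≤ log (v' x) := log_le_log (by have := hv x; positivity) hle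

theorem log_sum_mixingStep_sub_le [Nonempty ι]
    (hv' : ∀ x, v' x = v x * exp (-(η * ℓ x)) + β * ∑ z, v z)
    (hv : ∀ x, 0 < v x) (hβ : 0 ≤ β) (hηℓ : ∀ x, 0 ≤ η * ℓ x) :
    log (∑ x, v' x) - log (∑ z, v z)
      ≤ Fintype.card ι * β - η * ∑ x, v x / (∑ z, v z) * ℓ x
        + η ^ 2 * ∑ x, v x / (∑ z, v z) * ℓ x ^ 2 := by
  set V := ∑ z, v z
  have hV : 0 < V := sum_pos (fun z _ => hv z) univ_nonempty
  have hV' : 0 < ∑ x, v' x := sum_pos (fun x _ => mixingStep_pos hv' hv hβ x) univ_nonempty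
  have hsum : ∑ x, v' x / V ≤ ∑ x, (v x / V * (1 - η * ℓ x + (η * ℓ x) ^ 2) + β) := by
    refine sum_le_sum fun x _ => ?_
    have hq : v' x / V = v x / V * exp (-(η * ℓ x)) + β := by
      rw [hv']; field_simp
    rw [hq]
    gcongr
    exacts [(div_pos (hv x) hV).le, exp_neg_le_one_sub_add_sq (hηℓ x)]
  have hqsum : ∑ x, v x / V = 1 := by rw [← sum_div, div_self hV.ne']
  calc log (∑ x, v' x) - log V = log ((∑ x, v' x) / V) := (log_div hV'.ne' hV.ne').symm
    _ ≤ (∑ x, v' x) / V - 1 := log_le_sub_one_of_pos (div_pos hV' hV)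
    _ ≤ _ := by
      rw [sum_div]
      refine (sub_le_sub_right hsum 1).trans (le_of_eq ?_)
      have hexpand : ∀ x, v x / V * (1 - η * ℓ x + (η * ℓ x) ^ 2) + β
          = v x / V - η * (v x / V * ℓ x) + η ^ 2 * (v x / V * ℓ x ^ 2) + β := fun x => by ring
      simp only [hexpand, sum_add_distrib, sum_sub_distrib, ← mul_sum, hqsum, sum_const,
        card_univ, nsmul_eq_mul]
      ring

end MixingStep

section MixingRun

variable {ι : Type*} [Fintype ι] {w q ℓ : ℕ → ι → ℝ} {η β : ℝ} {T : ℕ}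

theorem mixingRun_pos (hw1 : ∀ x, w 1 x = 1) (hβ : 0 ≤ β)
    (hrec : ∀ t, 1 ≤ t → t ≤ T → ∀ x, w (t + 1) x = w t x * exp (-(η * ℓ t x)) + β * ∑ z, w t z)
    {t : ℕ} (ht1 : 1 ≤ t) (htT : t ≤ T + 1) (x : ι) : 0 < w t x := by
  induction t, ht1 using Nat.le_induction generalizing x with
  | base => rw [hw1]; exact one_pos
  | succ t ht ih => exact mixingStep_pos (hrec t ht (by omega)) (ih (by omega)) hβ x

theorem mixingRun_share (hw1 : ∀ x, w 1 x = 1) (hβ : 0 ≤ β) (hηℓ : ∀ t x, 0 ≤ η * ℓ t x)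
    (hrec : ∀ t, 1 ≤ t → t ≤ T → ∀ x, w (t + 1) x = w t x * exp (-(η * ℓ t x)) + β * ∑ z, w t z)
    {t : ℕ} (ht1 : 1 ≤ t) (htT : t ≤ T + 1) (x : ι) :
    β / (1 + Fintype.card ι * β) * ∑ z, w t z ≤ w t x := by
  have hNβ : 0 < 1 + Fintype.card ι * β := by positivity
  obtain rfl | ⟨s, hs1, rfl⟩ : t = 1 ∨ ∃ s, 1 ≤ s ∧ t = s + 1 :=
    (eq_or_lt_of_le ht1).imp Eq.symm fun h => ⟨t - 1, by omega, by omega⟩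
  · simp only [hw1, sum_const, card_univ, nsmul_eq_mul, mul_one]
    rw [div_mul_eq_mul_div, div_le_one hNβ]
    linarith
  · have hws : ∀ z, 0 ≤ w s z := fun z => (mixingRun_pos hw1 hβ hrec hs1 (by omega) z).le
    calc β / (1 + Fintype.card ι * β) * ∑ z, w (s + 1) z
        ≤ β / (1 + Fintype.card ι * β) * ((1 + Fintype.card ι * β) * ∑ z, w s z) := by
          gcongr
          exact sum_mixingStep_le (hrec s hs1 (by omega)) hws (hηℓ s)
      _ = β * ∑ z, w s z := by field_simp
      _ ≤ w (s + 1) x := mul_sum_le_mixingStep (hrec s hs1 (by omega)) hws x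

theorem mixingRun_regret_le [Nonempty ι] (hw1 : ∀ x, w 1 x = 1) (hβ : 0 < β)
    (hηℓ : ∀ t x, 0 ≤ η * ℓ t x)
    (hrec : ∀ t, 1 ≤ t → t ≤ T → ∀ x, w (t + 1) x = w t x * exp (-(η * ℓ t x)) + β * ∑ z, w t z)
    (hq : ∀ t x, q t x = w t x / ∑ z, w t z)
    {t0 t1 : ℕ} (ht0 : 1 ≤ t0) (ht01 : t0 ≤ t1) (ht1 : t1 ≤ T) (x : ι) :
    η * (∑ t ∈ Icc t0 t1, ∑ z, q t z * ℓ t z - ∑ t ∈ Icc t0 t1, ℓ t x)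
      ≤ log ((1 + Fintype.card ι * β) / β) + #(Icc t0 t1) * (Fintype.card ι * β)
        + η ^ 2 * ∑ t ∈ Icc t0 t1, ∑ z, q t z * ℓ t z ^ 2 := by
  have hpos : ∀ t, 1 ≤ t → t ≤ T + 1 → ∀ z, 0 < w t z := fun t ht1 htT =>
    mixingRun_pos hw1 hβ.le hrec ht1 htT
  have hWpos : ∀ t, 1 ≤ t → t ≤ T + 1 → 0 < ∑ z, w t z := fun t ht1 htT =>
    sum_pos (fun z _ => hpos t ht1 htT z) univ_nonempty
  have hpotential : log (∑ z, w (t1 + 1) z) - log (∑ z, w t0 z)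
      ≤ ∑ t ∈ Icc t0 t1, (Fintype.card ι * β - η * ∑ z, q t z * ℓ t z
          + η ^ 2 * ∑ z, q t z * ℓ t z ^ 2) := by
    rw [← sum_Icc_sub ht01 fun t => log (∑ z, w t z)]
    refine sum_le_sum fun t ht => ?_
    rw [mem_Icc] at ht
    simp only [hq]
    exact log_sum_mixingStep_sub_le (hrec t (by omega) (by omega))
      (hpos t (by omega) (by omega)) hβ.le (hηℓ t)
  have hexpert : log (w t0 x) - log (w (t1 + 1) x) ≤ η * ∑ t ∈ Icc t0 t1, ℓ t x := by
    rw [← neg_sub, ← sum_Icc_sub ht01 fun t => log (w t x), ← sum_neg_distrib, mul_sum]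
    refine sum_le_sum fun t ht => ?_
    rw [mem_Icc] at ht
    linarith [log_sub_le_log_mixingStep (hrec t (by omega) (by omega))
      (hpos t (by omega) (by omega)) hβ.le x]
  have hshare : log (β / (1 + Fintype.card ι * β)) + log (∑ z, w t0 z) ≤ log (w t0 x) := by
    rw [← log_mul (by positivity) (hWpos t0 ht0 (by omega)).ne']
    exact log_le_log (by have := hWpos t0 ht0 (by omega); positivity)
      (mixingRun_share hw1 hβ.le hηℓ hrec ht0 (by omega) x)
  have hlast : log (w (t1 + 1) x) ≤ log (∑ z, w (t1 + 1) z) :=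
    log_le_log (hpos _ (by omega) (by omega) x)
      (single_le_sum (fun z _ => (hpos _ (by omega) (by omega) z).le) (mem_univ x))
  rw [sum_add_distrib, sum_sub_distrib, sum_const, nsmul_eq_mul, ← mul_sum, ← mul_sum]
    at hpotential
  rw [← inv_div, log_inv]
  linarith

end MixingRun

theorem card_mul_sum_apply_self {κ α : Type*} [Fintype κ] [DecidableEq κ] [Fintype α] (k : κ)
    (F : (κ → α) → α → ℝ) (hF : ∀ y z, F (Function.update y k z) = F y) :
    Fintype.card α * ∑ y, F y (y k) = ∑ y, ∑ x, F y x := by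
  have hswap : Function.Involutive fun p : (κ → α) × α => (Function.update p.1 k p.2, p.1 k) :=
    fun p => by simp
  calc Fintype.card α * ∑ y, F y (y k) = ∑ y, ∑ x : α, F (Function.update y k x) (y k) := by
        simp only [hF, sum_const, card_univ, nsmul_eq_mul, mul_sum]
    _ = ∑ p : (κ → α) × α, F (Function.update p.1 k p.2) (p.1 k) := (Fintype.sum_prod_type' _).symm
    _ = ∑ p : (κ → α) × α, F p.1 p.2 := Fintype.sum_equiv (hswap.toPerm _) _ _ fun _ => rfl
    _ = ∑ y, ∑ x, F y x := Fintype.sum_prod_type' _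

/-- The importance-weighted estimate `N · f t x · 𝟙[x = y_t]` of `f t x`, where round `t`
(counted from `1`) reads the coordinate `t - 1` of `y`; it is `0` after round `T`. -/
def lossEstimate {ι : Type*} [Fintype ι] [DecidableEq ι] {T : ℕ} (f : ℕ → ι → ℝ)
    (y : Fin T → ι) (t : ℕ) (x : ι) : ℝ :=
  if h : t - 1 < T then Fintype.card ι * f t x * if x = y ⟨t - 1, h⟩ then 1 else 0 else 0

section LossEstimate

variable {ι : Type*} [Fintype ι] [DecidableEq ι] {T : ℕ} {f : ℕ → ι → ℝ}

theorem lossEstimate_of_succ_eq {t : ℕ} {k : Fin T} (hk : (k : ℕ) + 1 = t) (y : Fin T → ι)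
    (x : ι) : lossEstimate f y t x = Fintype.card ι * f t x * if x = y k then 1 else 0 := by
  have hkt : (⟨t - 1, by omega⟩ : Fin T) = k := Fin.ext (by simp; omega)
  rw [lossEstimate, dif_pos (by omega), hkt]

theorem lossEstimate_nonneg (hf : ∀ t x, 0 ≤ f t x) (y : Fin T → ι) (t : ℕ) (x : ι) :
    0 ≤ lossEstimate f y t x := by
  unfold lossEstimate
  have := hf t x
  split_ifs <;> positivity

theorem lossEstimate_update {t : ℕ} {k : Fin T} (ht1 : 1 ≤ t) (htk : t ≤ k) (y : Fin T → ι)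
    (z : ι) : lossEstimate f (Function.update y k z) t = lossEstimate f y t := by
  funext x
  have hne : (⟨t - 1, by omega⟩ : Fin T) ≠ k := Fin.ne_of_val_ne (by simp; omega)
  rw [lossEstimate, lossEstimate, dif_pos (by omega), dif_pos (by omega),
    Function.update_of_ne hne]

theorem sum_sum_mul_lossEstimate_pow {t : ℕ} {k : Fin T} (hk : (k : ℕ) + 1 = t)
    (F : (Fin T → ι) → ι → ℝ) (hF : ∀ y z, F (Function.update y k z) = F y) (n : ℕ) :
    ∑ y, ∑ x, F y x * lossEstimate f y t x ^ (n + 1)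
      = Fintype.card ι ^ n * ∑ y, ∑ x, F y x * f t x ^ (n + 1) := by
  have hdiag : ∀ y, ∑ x, F y x * lossEstimate f y t x ^ (n + 1)
      = Fintype.card ι ^ n * (Fintype.card ι * (F y (y k) * f t (y k) ^ (n + 1))) := fun y => by
    simp only [lossEstimate_of_succ_eq hk, mul_pow, ite_pow, zero_pow n.succ_ne_zero,
      mul_ite, mul_one, mul_zero, sum_ite_eq', mem_univ, if_true]
    ring
  simp only [hdiag, ← mul_sum]
  rw [card_mul_sum_apply_self k (fun y x => F y x * f t x ^ (n + 1)) fun y z => by rw [hF]]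

theorem sum_lossEstimate {t : ℕ} {k : Fin T} (hk : (k : ℕ) + 1 = t) (x : ι) :
    ∑ y : Fin T → ι, lossEstimate f y t x = Fintype.card ι ^ T * f t x := by
  have := sum_sum_mul_lossEstimate_pow (f := f) hk (fun _ z => if z = x then 1 else 0)
    (fun _ _ => rfl) 0
  simp only [zero_add, pow_one, pow_zero, one_mul, ite_mul, one_mul, zero_mul, sum_ite_eq',
    mem_univ, if_true, sum_const, card_univ, Fintype.card_fun, Fintype.card_fin,
    nsmul_eq_mul] at this
  rw [this]; push_cast; ring

end LossEstimate

section ExpectedRegret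

variable {ι : Type*} [Fintype ι] [DecidableEq ι] {T : ℕ} {f : ℕ → ι → ℝ} {η β : ℝ}
  {w q : (Fin T → ι) → ℕ → ι → ℝ}

theorem mw2_weights_update_eq (hw1 : ∀ y x, w y 1 x = 1)
    (hrec : ∀ y t, 1 ≤ t → t ≤ T → ∀ x,
      w y (t + 1) x = w y t x * exp (-(η * lossEstimate f y t x)) + β * ∑ z, w y t z)
    (k : Fin T) (z : ι) (y : Fin T → ι) {t : ℕ} (ht1 : 1 ≤ t) (htk : t ≤ k + 1) :
    w (Function.update y k z) t = w y t := by
  induction t, ht1 using Nat.le_induction with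
  | base => funext x; rw [hw1, hw1]
  | succ t ht ih =>
    funext x
    rw [hrec _ t ht (by omega), hrec _ t ht (by omega), ih (by omega),
      lossEstimate_update ht (by omega)]

theorem mw2_q_update_eq (hw1 : ∀ y x, w y 1 x = 1)
    (hrec : ∀ y t, 1 ≤ t → t ≤ T → ∀ x,
      w y (t + 1) x = w y t x * exp (-(η * lossEstimate f y t x)) + β * ∑ z, w y t z)
    (hq : ∀ y t x, q y t x = w y t x / ∑ z, w y t z)
    (k : Fin T) (z : ι) (y : Fin T → ι) {t : ℕ} (ht1 : 1 ≤ t) (htk : t ≤ k + 1) :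
    q (Function.update y k z) t = q y t :=
  funext fun x => by simp only [hq, mw2_weights_update_eq hw1 hrec k z y ht1 htk]

theorem sum_sum_q_mul_lossEstimate_sq_le [Nonempty ι] (hf : ∀ t x, f t x ∈ Set.Icc (0 : ℝ) 1)
    (hβ : 0 ≤ β) (hw1 : ∀ y x, w y 1 x = 1)
    (hrec : ∀ y t, 1 ≤ t → t ≤ T → ∀ x,
      w y (t + 1) x = w y t x * exp (-(η * lossEstimate f y t x)) + β * ∑ z, w y t z)
    (hq : ∀ y t x, q y t x = w y t x / ∑ z, w y t z) {t : ℕ} {k : Fin T} (hk : (k : ℕ) + 1 = t) :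
    ∑ y, ∑ z, q y t z * lossEstimate f y t z ^ 2
      ≤ Fintype.card ι * Fintype.card ι ^ T := by
  calc ∑ y, ∑ z, q y t z * lossEstimate f y t z ^ 2
      = Fintype.card ι * ∑ y, ∑ z, q y t z * f t z ^ 2 := by
        simpa using sum_sum_mul_lossEstimate_pow hk (fun y => q y t)
          (fun y z => mw2_q_update_eq hw1 hrec hq k z y (by omega) hk.ge) 1
    _ ≤ Fintype.card ι * ∑ _y : Fin T → ι, (1 : ℝ) := by
        gcongr with y
        have hpos := mixingRun_pos (hw1 y) hβ (hrec y) (t := t) (by omega) (by omega)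
        simp only [hq]
        exact sum_div_sum_mul_le_one (fun z => (hpos z).le)
          (sum_pos (fun z _ => hpos z) univ_nonempty)
          fun z => pow_le_one₀ (hf t z).1 (hf t z).2
    _ = Fintype.card ι * Fintype.card ι ^ T := by simp

theorem mw2_expected_regret_le [Nonempty ι] (hf : ∀ t x, f t x ∈ Set.Icc (0 : ℝ) 1)
    (hη : 0 < η) (hβ : 0 < β) (hw1 : ∀ y x, w y 1 x = 1)
    (hrec : ∀ y t, 1 ≤ t → t ≤ T → ∀ x,
      w y (t + 1) x = w y t x * exp (-(η * lossEstimate f y t x)) + β * ∑ z, w y t z)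
    (hq : ∀ y t x, q y t x = w y t x / ∑ z, w y t z)
    {t0 t1 : ℕ} (ht0 : 1 ≤ t0) (ht01 : t0 ≤ t1) (ht1 : t1 ≤ T) (x : ι) :
    η * ((∑ y, ∑ t ∈ Icc t0 t1, ∑ z, q y t z * f t z) / Fintype.card ι ^ T
        - ∑ t ∈ Icc t0 t1, f t x)
      ≤ log ((1 + Fintype.card ι * β) / β) + #(Icc t0 t1) * (Fintype.card ι * β)
        + η ^ 2 * Fintype.card ι * #(Icc t0 t1) := by
  set N : ℝ := (Fintype.card ι : ℝ)
  set P : ℝ := N ^ T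
  have hP : 0 < P := by positivity
  have hround : ∀ t ∈ Icc t0 t1, ∃ k : Fin T, (k : ℕ) + 1 = t := fun t ht => by
    rw [mem_Icc] at ht
    exact ⟨⟨t - 1, by omega⟩, by dsimp only; omega⟩
  have hpath := sum_le_sum fun y (_ : y ∈ univ) =>
    mixingRun_regret_le (hw1 y) hβ (fun t x => mul_nonneg hη.le
      (lossEstimate_nonneg (fun t x => (hf t x).1) y t x)) (hrec y) (hq y) ht0 ht01 ht1 x
  have hlearner : ∑ y, ∑ t ∈ Icc t0 t1, ∑ z, q y t z * lossEstimate f y t z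
      = ∑ y, ∑ t ∈ Icc t0 t1, ∑ z, q y t z * f t z := by
    refine sum_comm.trans (Eq.trans (sum_congr rfl fun t ht => ?_) sum_comm)
    obtain ⟨k, hk⟩ := hround t ht
    simpa using sum_sum_mul_lossEstimate_pow hk (fun y => q y t)
      (fun y z => mw2_q_update_eq hw1 hrec hq k z y (by omega) hk.ge) 0
  have hexpert : ∑ y : Fin T → ι, ∑ t ∈ Icc t0 t1, lossEstimate f y t x
      = P * ∑ t ∈ Icc t0 t1, f t x := by
    rw [sum_comm, mul_sum]
    refine sum_congr rfl fun t ht => ?_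
    obtain ⟨k, hk⟩ := hround t ht
    exact sum_lossEstimate hk x
  have hsquare : ∑ y, ∑ t ∈ Icc t0 t1, ∑ z, q y t z * lossEstimate f y t z ^ 2
      ≤ #(Icc t0 t1) * (N * P) := by
    rw [sum_comm, ← nsmul_eq_mul, ← sum_const]
    refine sum_le_sum fun t ht => ?_
    obtain ⟨k, hk⟩ := hround t ht
    exact sum_sum_q_mul_lossEstimate_sq_le hf hβ.le hw1 hrec hq hk
  have hcard : ((Fintype.card (Fin T → ι) : ℕ) : ℝ) = P := by simp [P, N]
  rw [← mul_sum, sum_sub_distrib, hlearner, hexpert, sum_add_distrib, sum_const, card_univ,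
    nsmul_eq_mul, hcard, ← mul_sum] at hpath
  calc η * ((∑ y, ∑ t ∈ Icc t0 t1, ∑ z, q y t z * f t z) / P - ∑ t ∈ Icc t0 t1, f t x)
      = η * (∑ y, ∑ t ∈ Icc t0 t1, ∑ z, q y t z * f t z - P * ∑ t ∈ Icc t0 t1, f t x) / P := by
        field_simp
    _ ≤ _ := by
        rw [div_le_iff₀ hP]
        nlinarith [mul_le_mul_of_nonneg_left hsquare (sq_nonneg η)]

end ExpectedRegret

theorem log_mixing_add_le {N T m : ℕ} (hN : 1 ≤ N) (hT : 1 ≤ T) (hNT : 3 ≤ N * T) (hm : m ≤ T) :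
    log ((1 + N * (1 / (T : ℝ) / N)) / (1 / (T : ℝ) / N)) + m * (N * (1 / (T : ℝ) / N))
      ≤ 4 * log ((N : ℝ) * T) := by
  have hN0 : (0 : ℝ) < N := by exact_mod_cast hN
  have hT0 : (0 : ℝ) < T := by exact_mod_cast hT
  have hNT3 : (3 : ℝ) ≤ N * T := by exact_mod_cast hNT
  have hmT : (m : ℝ) ≤ T := by exact_mod_cast hm
  have hconst : (1 + N * (1 / (T : ℝ) / N)) / (1 / (T : ℝ) / N) = N * T + N := by
    field_simp
  have hratio : (m : ℝ) * (N * (1 / (T : ℝ) / N)) ≤ 1 := by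
    rw [show (m : ℝ) * (N * (1 / (T : ℝ) / N)) = m / T by field_simp, div_le_one hT0]
    exact hmT
  have hlog_one : 1 ≤ log ((N : ℝ) * T) := by
    rw [le_log_iff_exp_le (by positivity)]
    linarith [exp_one_lt_d9]
  have hlog_double : log ((N : ℝ) * T + N) ≤ log 2 + log ((N : ℝ) * T) := by
    rw [← log_mul two_ne_zero (by positivity)]
    have hT1 : (1 : ℝ) ≤ T := by exact_mod_cast hT
    exact log_le_log (by positivity) (by nlinarith [mul_le_mul_of_nonneg_left hT1 hN0.le])
  have hlog_two : log 2 ≤ log ((N : ℝ) * T) := log_le_log two_pos (by linarith)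
  rw [hconst]
  linarith

/-- Expected regret of the amortized MW² recursion with
mixing parameter γ = 1/T and uniform independent random coordinates
y_1, …, y_T (the expectation is a uniform average over all `y : Fin T → Fin N`,
where `y ⟨t-1,_⟩` is the coordinate drawn at round `t`):
E[Σ_t Σ_x q_t(x) f_t(x)] − min_x Σ_t f_t(x) ≤ 4 log(N T)/η + η N T. -/
theorem mw2_expected_regret
    (N T : ℕ) (hN : 1 ≤ N) (hT : 1 ≤ T) (hNT : 3 ≤ N * T)
    (η : ℝ) (hη : 0 < η)
    (f : ℕ → Fin N → ℝ) (hf : ∀ t x, f t x ∈ Set.Icc (0 : ℝ) 1)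
    (w : (Fin T → Fin N) → ℕ → Fin N → ℝ)
    (hw1 : ∀ y x, w y 1 x = 1)
    (hwrec : ∀ y t, ∀ h1 : 1 ≤ t, ∀ h2 : t ≤ T, ∀ x,
      w y (t + 1) x
        = w y t x *
            Real.exp (-(η * (N : ℝ) * f t x *
              (if x = y ⟨t - 1, by omega⟩ then 1 else 0)))
          + ((1 / (T : ℝ)) / (N : ℝ)) * ∑ z, w y t z)
    (q : (Fin T → Fin N) → ℕ → Fin N → ℝ)
    (hq : ∀ y t x, q y t x = w y t x / ∑ z, w y t z)
    (t0 t1 : ℕ) (ht0 : 1 ≤ t0) (ht01 : t0 ≤ t1) (ht1 : t1 ≤ T) :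
    (∑ y : Fin T → Fin N, ∑ t ∈ Icc t0 t1, ∑ x, q y t x * f t x) / (N : ℝ) ^ T
      - (univ.inf' (univ_nonempty_iff.mpr ⟨⟨0, hN⟩⟩)
          fun x => ∑ t ∈ Icc t0 t1, f t x)
    ≤ 4 * Real.log ((N : ℝ) * (T : ℝ)) / η + η * (N : ℝ) * (T : ℝ) := by
  have : Nonempty (Fin N) := ⟨⟨0, hN⟩⟩
  obtain ⟨xs, -, hxs⟩ := exists_mem_eq_inf' (univ_nonempty_iff.mpr ⟨⟨0, hN⟩⟩)
    fun x => ∑ t ∈ Icc t0 t1, f t x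
  have hrec : ∀ y t, 1 ≤ t → t ≤ T → ∀ x, w y (t + 1) x
      = w y t x * exp (-(η * lossEstimate f y t x)) + 1 / (T : ℝ) / N * ∑ z, w y t z := by
    intro y t h1 h2 x
    rw [hwrec y t h1 h2 x, lossEstimate_of_succ_eq (k := ⟨t - 1, by omega⟩) (by dsimp only; omega),
      Fintype.card_fin, mul_assoc η, mul_assoc η, mul_assoc]
  have hm : #(Icc t0 t1) ≤ T := by simp only [Nat.card_Icc]; omega
  have hregret := mw2_expected_regret_le hf hη (by positivity) hw1 hrec hq ht0 ht01 ht1 xs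
  simp only [Fintype.card_fin] at hregret
  have hmT : (#(Icc t0 t1) : ℝ) ≤ T := by exact_mod_cast hm
  rw [hxs]
  refine le_of_mul_le_mul_left ?_ hη
  calc _ ≤ _ := hregret
    _ ≤ 4 * log ((N : ℝ) * T) + η ^ 2 * N * T := by
        gcongr
        exact log_mixing_add_le hN hT hNT hm
    _ = η * (4 * log ((N : ℝ) * T) / η + η * N * T) := by field_simp
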